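/- Let β > 0, κ ≥ 0 and τ > 0 be real numbers. Let M_Ω ∈ ℝ^{n_Ω×n_Ω} and M_Γ ∈ ℝ^{n_Γ×n_Γ} be diagonal matrices with positive diagonal entries, and let L_Ω ∈ ℝ^{n_Ω×n_Ω} and L_Γ ∈ ℝ^{n_Γ×n_Γ} be symmetric positive semidefinite. Let F₁, F₂, G₁, G₂ : ℝ → ℝ be differentiable with F₁, G₁ convex and F₂, G₂ concave, and set F = F₁ + F₂, G = G₁ + G₂. Suppose U, U⁻, μ ∈ ℝ^{n_Ω} and θ ∈ ℝ^{n_Γ} satisfy: (a) β·θ = μ|_Γ; (b) M_Ω(U − U⁻) + β⁻¹·ext(M_Γ(U|_Γ − U⁻|_Γ)) + τ·L_Ω·μ + τ·β⁻¹·ext(L_Γ·θ) = 0; (c) M_Ω·μ + ext(M_Γ·θ) = L_Ω·U + κ·ext(L_Γ·(U|_Γ)) + M_Ω·(F₁′(U) + F₂′(U⁻)) + ext(M_Γ·(G₁′(U|_Γ) + G₂′(U⁻|_Γ))), where the derivatives are applied entrywise. Then (1/2)·UᵀL_Ω U + (1/2)·(U − U⁻)ᵀL_Ω(U − U⁻)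 + (κ/2)·(U|_Γ)ᵀL_Γ(U|_Γ) + (κ/2)·(U|_Γ − U⁻|_Γ)ᵀL_Γ(U|_Γ − U⁻|_Γ) + 𝟙ᵀM_Ω·F(U) + 𝟙ᵀM_Γ·G(U|_Γ) + τ·μᵀL_Ω μ + τ·θᵀL_Γ θ ≤ (1/2)·(U⁻)ᵀL_Ω U⁻ + (κ/2)·(U⁻|_Γ)ᵀL_Γ(U⁻|_Γ) + 𝟙ᵀM_Ω·F(U⁻) + 𝟙ᵀM_Γ·G(U⁻|_Γ). -/

import Mathlib

/-
The scheme is tested twice. Pairing the evolution equation (b) with `μ` and using `β θ = μ|_Γ`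
expresses the mass-weighted increment `μᵀ M_Ω (U - U⁻) + θᵀ M_Γ (U|_Γ - U⁻|_Γ)` as minus the
dissipation `τ (μᵀ L_Ω μ + θᵀ L_Γ θ)`. Pairing the potential equation (c) with `U - U⁻` expresses
the same increment through the stiffness and potential terms. The polarization identity
`2 (a - b)ᵀ L a = aᵀ L a - bᵀ L b + (a - b)ᵀ L (a - b)` turns the stiffness terms into energy
differences, and the convex–concave splitting (`F₁'` taken implicitly, `F₂'` explicitly) bounds the
potential differences by tangent-line estimates, entry by entry, with nonnegative mass weights.
-/

open Matrix

/-- Restriction of a bulk vector (indexed by `Fin nΓ ⊕ Fin nI`, boundary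
coordinates first) to its boundary coordinates. -/
def restrΓ {nΓ nI : ℕ} (v : Fin nΓ ⊕ Fin nI → ℝ) : Fin nΓ → ℝ := fun i => v (Sum.inl i)

/-- Extension of a boundary vector by zero in the interior coordinates. -/
def extΩ {nΓ nI : ℕ} (x : Fin nΓ → ℝ) : Fin nΓ ⊕ Fin nI → ℝ := Sum.elim x 0

open Set

lemma ConvexOn.add_deriv_mul_sub_le {S : Set ℝ} {f : ℝ → ℝ} (hf : ConvexOn ℝ S f) {x y : ℝ}
    (hx : x ∈ S) (hy : y ∈ S) (hd : DifferentiableAt ℝ f x) :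
    f x + deriv f x * (y - x) ≤ f y := by
  rcases lt_trichotomy x y with hxy | rfl | hxy
  · have h := hf.deriv_le_slope hx hy hxy hd
    rw [slope_def_field, le_div_iff₀ (sub_pos.mpr hxy)] at h
    linarith
  · simp
  · have h := hf.slope_le_deriv hy hx hxy hd
    rw [slope_def_field, div_le_iff₀ (sub_pos.mpr hxy)] at h
    linarith

lemma ConcaveOn.le_add_deriv_mul_sub {S : Set ℝ} {f : ℝ → ℝ} (hf : ConcaveOn ℝ S f) {x y : ℝ}
    (hx : x ∈ S) (hy : y ∈ S) (hd : DifferentiableAt ℝ f x) :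
    f y ≤ f x + deriv f x * (y - x) := by
  have h := hf.neg.add_deriv_mul_sub_le hx hy hd.neg
  rw [deriv.neg'] at h
  simp only [Pi.neg_apply] at h
  linarith

lemma convex_concave_split_sub_le {f g : ℝ → ℝ} (hf : ConvexOn ℝ univ f)
    (hg : ConcaveOn ℝ univ g) {x y : ℝ} (hfd : DifferentiableAt ℝ f x)
    (hgd : DifferentiableAt ℝ g y) :
    f x + g x - (f y + g y) ≤ (deriv f x + deriv g y) * (x - y) := by
  have hf' := hf.add_deriv_mul_sub_le (mem_univ x) (mem_univ y) hfd
  have hg' := hg.le_add_deriv_mul_sub (mem_univ y) (mem_univ x) hgd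
  linarith

lemma one_dotProduct_diagonal_split_sub_le {ι : Type*} [Fintype ι] [DecidableEq ι]
    {d : ι → ℝ} (hd : ∀ i, 0 ≤ d i) {f g : ℝ → ℝ} (hf : ConvexOn ℝ univ f)
    (hg : ConcaveOn ℝ univ g) (hfd : Differentiable ℝ f) (hgd : Differentiable ℝ g)
    (u v : ι → ℝ) :
    (fun _ => (1 : ℝ)) ⬝ᵥ diagonal d *ᵥ (fun i => f (u i) + g (u i))
        - (fun _ => (1 : ℝ)) ⬝ᵥ diagonal d *ᵥ (fun i => f (v i) + g (v i))
      ≤ (u - v) ⬝ᵥ diagonal d *ᵥ (fun i => deriv f (u i) + deriv g (v i)) := by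
  simp only [dotProduct, mulVec_diagonal, one_mul, ← Finset.sum_sub_distrib]
  refine Finset.sum_le_sum fun i _ => ?_
  have h := mul_le_mul_of_nonneg_left
    (convex_concave_split_sub_le hf hg (hfd (u i)) (hgd (v i))) (hd i)
  simp only [Pi.sub_apply]
  linarith

namespace Matrix.IsSymm

variable {n α : Type*} [Fintype n] {A : Matrix n n α}

lemma dotProduct_mulVec_comm [CommSemiring α] (hA : A.IsSymm) (v w : n → α) :
    v ⬝ᵥ A *ᵥ w = w ⬝ᵥ A *ᵥ v := by
  rw [dotProduct_mulVec, ← mulVec_transpose, hA.eq, dotProduct_comm]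

lemma two_mul_sub_dotProduct_mulVec [CommRing α] (hA : A.IsSymm) (a b : n → α) :
    2 * ((a - b) ⬝ᵥ A *ᵥ a)
      = a ⬝ᵥ A *ᵥ a - b ⬝ᵥ A *ᵥ b + (a - b) ⬝ᵥ A *ᵥ (a - b) := by
  have h := hA.dotProduct_mulVec_comm a b
  simp only [sub_dotProduct, mulVec_sub, dotProduct_sub]
  linear_combination h

end Matrix.IsSymm

section BoundaryCoupling

variable {nΓ nI : ℕ}

lemma restrΓ_sub (v w : Fin nΓ ⊕ Fin nI → ℝ) : restrΓ (v - w) = restrΓ v - restrΓ w := rfl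

lemma dotProduct_extΩ (v : Fin nΓ ⊕ Fin nI → ℝ) (x : Fin nΓ → ℝ) :
    v ⬝ᵥ extΩ x = restrΓ v ⬝ᵥ x := by
  simp [dotProduct, extΩ, restrΓ, Fintype.sum_sum_type]

lemma mass_increment_add_dissipation_eq_zero
    {A C : Matrix (Fin nΓ ⊕ Fin nI) (Fin nΓ ⊕ Fin nI) ℝ} {B D : Matrix (Fin nΓ) (Fin nΓ) ℝ}
    {β τ : ℝ} (hβ : β ≠ 0) {V μ : Fin nΓ ⊕ Fin nI → ℝ} {W θ : Fin nΓ → ℝ}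
    (heq : β • θ = restrΓ μ)
    (h : A *ᵥ V + β⁻¹ • extΩ (B *ᵥ W) + τ • C *ᵥ μ + (τ * β⁻¹) • extΩ (D *ᵥ θ) = 0) :
    μ ⬝ᵥ A *ᵥ V + θ ⬝ᵥ B *ᵥ W + τ * (μ ⬝ᵥ C *ᵥ μ) + τ * (θ ⬝ᵥ D *ᵥ θ) = 0 := by
  have h' := congrArg (μ ⬝ᵥ ·) h
  simp only [dotProduct_add, dotProduct_smul, dotProduct_extΩ, ← heq, smul_dotProduct,
    smul_eq_mul, dotProduct_zero] at h'
  field_simp at h'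
  linear_combination h'

lemma potential_eq_dotProduct_increment
    {A C : Matrix (Fin nΓ ⊕ Fin nI) (Fin nΓ ⊕ Fin nI) ℝ} {B D : Matrix (Fin nΓ) (Fin nΓ) ℝ}
    (hA : A.IsSymm) (hB : B.IsSymm) {κ : ℝ} {μ U f : Fin nΓ ⊕ Fin nI → ℝ} {θ g : Fin nΓ → ℝ}
    (h : A *ᵥ μ + extΩ (B *ᵥ θ)
      = C *ᵥ U + κ • extΩ (D *ᵥ restrΓ U) + A *ᵥ f + extΩ (B *ᵥ g))
    (V : Fin nΓ ⊕ Fin nI → ℝ) :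
    μ ⬝ᵥ A *ᵥ V + θ ⬝ᵥ B *ᵥ restrΓ V
      = V ⬝ᵥ C *ᵥ U + κ * (restrΓ V ⬝ᵥ D *ᵥ restrΓ U) + V ⬝ᵥ A *ᵥ f
        + restrΓ V ⬝ᵥ B *ᵥ g := by
  have h' := congrArg (V ⬝ᵥ ·) h
  simp only [dotProduct_add, dotProduct_smul, dotProduct_extΩ, smul_eq_mul] at h'
  rwa [hA.dotProduct_mulVec_comm V, hB.dotProduct_mulVec_comm] at h'

end BoundaryCoupling

theorem discrete_energy_inequality_GMS_general (nΓ nI : ℕ)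
    (β κ τ : ℝ) (hβ : 0 < β)
    (MΩ : Matrix (Fin nΓ ⊕ Fin nI) (Fin nΓ ⊕ Fin nI) ℝ)
    (dΩ : Fin nΓ ⊕ Fin nI → ℝ) (hdΩ : ∀ i, 0 < dΩ i) (hMΩ : MΩ = Matrix.diagonal dΩ)
    (MΓ : Matrix (Fin nΓ) (Fin nΓ) ℝ)
    (dΓ : Fin nΓ → ℝ) (hdΓ : ∀ i, 0 < dΓ i) (hMΓ : MΓ = Matrix.diagonal dΓ)
    (LΩ : Matrix (Fin nΓ ⊕ Fin nI) (Fin nΓ ⊕ Fin nI) ℝ) (hLΩ : LΩ.PosSemidef)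
    (LΓ : Matrix (Fin nΓ) (Fin nΓ) ℝ) (hLΓ : LΓ.PosSemidef)
    (F₁ F₂ G₁ G₂ : ℝ → ℝ)
    (hF₁d : Differentiable ℝ F₁) (hF₂d : Differentiable ℝ F₂)
    (hG₁d : Differentiable ℝ G₁) (hG₂d : Differentiable ℝ G₂)
    (hF₁c : ConvexOn ℝ Set.univ F₁) (hG₁c : ConvexOn ℝ Set.univ G₁)
    (hF₂c : ConcaveOn ℝ Set.univ F₂) (hG₂c : ConcaveOn ℝ Set.univ G₂)
    (U U' μ : Fin nΓ ⊕ Fin nI → ℝ) (θ : Fin nΓ → ℝ)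
    -- (a) chemical equilibrium on the boundary
    (heq : β • θ = restrΓ μ)
    -- (b) combined discrete evolution equation
    (hcombined : MΩ.mulVec (U - U') + β⁻¹ • extΩ (MΓ.mulVec (restrΓ U - restrΓ U'))
        + τ • LΩ.mulVec μ + (τ * β⁻¹) • extΩ (LΓ.mulVec θ) = 0)
    -- (c) the discrete chemical potential equation
    (hpot : MΩ.mulVec μ + extΩ (MΓ.mulVec θ)
        = LΩ.mulVec U + κ • extΩ (LΓ.mulVec (restrΓ U))
          + MΩ.mulVec (fun i => deriv F₁ (U i) + deriv F₂ (U' i))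
          + extΩ (MΓ.mulVec (fun i => deriv G₁ (restrΓ U i) + deriv G₂ (restrΓ U' i)))) :
    (1 / 2) * (U ⬝ᵥ LΩ.mulVec U)
      + (1 / 2) * ((U - U') ⬝ᵥ LΩ.mulVec (U - U'))
      + (κ / 2) * (restrΓ U ⬝ᵥ LΓ.mulVec (restrΓ U))
      + (κ / 2) * ((restrΓ U - restrΓ U') ⬝ᵥ LΓ.mulVec (restrΓ U - restrΓ U'))
      + (fun _ => (1 : ℝ)) ⬝ᵥ MΩ.mulVec (fun i => F₁ (U i) + F₂ (U i))
      + (fun _ => (1 : ℝ)) ⬝ᵥ MΓ.mulVec (fun i => G₁ (restrΓ U i) + G₂ (restrΓ U i))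
      + τ * (μ ⬝ᵥ LΩ.mulVec μ) + τ * (θ ⬝ᵥ LΓ.mulVec θ)
    ≤ (1 / 2) * (U' ⬝ᵥ LΩ.mulVec U')
      + (κ / 2) * (restrΓ U' ⬝ᵥ LΓ.mulVec (restrΓ U'))
      + (fun _ => (1 : ℝ)) ⬝ᵥ MΩ.mulVec (fun i => F₁ (U' i) + F₂ (U' i))
      + (fun _ => (1 : ℝ)) ⬝ᵥ MΓ.mulVec (fun i => G₁ (restrΓ U' i) + G₂ (restrΓ U' i)) := by
  subst hMΩ hMΓ
  have hLΩs : LΩ.IsSymm := isHermitian_iff_isSymm.mp hLΩ.isHermitian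
  have hLΓs : LΓ.IsSymm := isHermitian_iff_isSymm.mp hLΓ.isHermitian
  have dissipation := mass_increment_add_dissipation_eq_zero hβ.ne' heq hcombined
  have increment := potential_eq_dotProduct_increment (isSymm_diagonal dΩ) (isSymm_diagonal dΓ)
    hpot (U - U')
  rw [restrΓ_sub] at increment
  have bulk := hLΩs.two_mul_sub_dotProduct_mulVec U U'
  have surface := hLΓs.two_mul_sub_dotProduct_mulVec (restrΓ U) (restrΓ U')
  have hF := one_dotProduct_diagonal_split_sub_le (fun i => (hdΩ i).le) hF₁c hF₂c hF₁d hF₂d U U'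
  have hG := one_dotProduct_diagonal_split_sub_le (fun i => (hdΓ i).le) hG₁c hG₂c hG₁d hG₂d
    (restrΓ U) (restrΓ U')
  linear_combination dissipation - increment - (1 / 2) * bulk - (κ / 2) * surface + hF + hG

/-- Lemma 5.4 of the paper, case `L = 0`, the GMS limit:
under the constraint `β·θ = μ|_Γ` and the combined discrete equation, the
discrete energy inequality holds without the reaction dissipation term. -/
theorem discrete_energy_inequality_GMS (nΓ nI : ℕ) (hnΓ : 1 ≤ nΓ)
    (β κ τ : ℝ) (hβ : 0 < β) (hκ : 0 ≤ κ) (hτ : 0 < τ)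
    (MΩ : Matrix (Fin nΓ ⊕ Fin nI) (Fin nΓ ⊕ Fin nI) ℝ)
    (dΩ : Fin nΓ ⊕ Fin nI → ℝ) (hdΩ : ∀ i, 0 < dΩ i) (hMΩ : MΩ = Matrix.diagonal dΩ)
    (MΓ : Matrix (Fin nΓ) (Fin nΓ) ℝ)
    (dΓ : Fin nΓ → ℝ) (hdΓ : ∀ i, 0 < dΓ i) (hMΓ : MΓ = Matrix.diagonal dΓ)
    (LΩ : Matrix (Fin nΓ ⊕ Fin nI) (Fin nΓ ⊕ Fin nI) ℝ) (hLΩ : LΩ.PosSemidef)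
    (LΓ : Matrix (Fin nΓ) (Fin nΓ) ℝ) (hLΓ : LΓ.PosSemidef)
    (F₁ F₂ G₁ G₂ : ℝ → ℝ)
    (hF₁d : Differentiable ℝ F₁) (hF₂d : Differentiable ℝ F₂)
    (hG₁d : Differentiable ℝ G₁) (hG₂d : Differentiable ℝ G₂)
    (hF₁c : ConvexOn ℝ Set.univ F₁) (hG₁c : ConvexOn ℝ Set.univ G₁)
    (hF₂c : ConcaveOn ℝ Set.univ F₂) (hG₂c : ConcaveOn ℝ Set.univ G₂)
    (U U' μ : Fin nΓ ⊕ Fin nI → ℝ) (θ : Fin nΓ → ℝ)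
    -- (a) chemical equilibrium on the boundary
    (heq : β • θ = restrΓ μ)
    -- (b) combined discrete evolution equation
    (hcombined : MΩ.mulVec (U - U') + β⁻¹ • extΩ (MΓ.mulVec (restrΓ U - restrΓ U'))
        + τ • LΩ.mulVec μ + (τ * β⁻¹) • extΩ (LΓ.mulVec θ) = 0)
    -- (c) the discrete chemical potential equation
    (hpot : MΩ.mulVec μ + extΩ (MΓ.mulVec θ)
        = LΩ.mulVec U + κ • extΩ (LΓ.mulVec (restrΓ U))
          + MΩ.mulVec (fun i => deriv F₁ (U i) + deriv F₂ (U' i))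
          + extΩ (MΓ.mulVec (fun i => deriv G₁ (restrΓ U i) + deriv G₂ (restrΓ U' i)))) :
    (1 / 2) * (U ⬝ᵥ LΩ.mulVec U)
      + (1 / 2) * ((U - U') ⬝ᵥ LΩ.mulVec (U - U'))
      + (κ / 2) * (restrΓ U ⬝ᵥ LΓ.mulVec (restrΓ U))
      + (κ / 2) * ((restrΓ U - restrΓ U') ⬝ᵥ LΓ.mulVec (restrΓ U - restrΓ U'))
      + (fun _ => (1 : ℝ)) ⬝ᵥ MΩ.mulVec (fun i => F₁ (U i) + F₂ (U i))
      + (fun _ => (1 : ℝ)) ⬝ᵥ MΓ.mulVec (fun i => G₁ (restrΓ U i) + G₂ (restrΓ U i))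
      + τ * (μ ⬝ᵥ LΩ.mulVec μ) + τ * (θ ⬝ᵥ LΓ.mulVec θ)
    ≤ (1 / 2) * (U' ⬝ᵥ LΩ.mulVec U')
      + (κ / 2) * (restrΓ U' ⬝ᵥ LΓ.mulVec (restrΓ U'))
      + (fun _ => (1 : ℝ)) ⬝ᵥ MΩ.mulVec (fun i => F₁ (U' i) + F₂ (U' i))
      + (fun _ => (1 : ℝ)) ⬝ᵥ MΓ.mulVec (fun i => G₁ (restrΓ U' i) + G₂ (restrΓ U' i)) :=
  discrete_energy_inequality_GMS_general nΓ nI β κ τ hβ MΩ dΩ hdΩ hMΩ MΓ dΓ hdΓ hMΓ LΩ hLΩ LΓ hLΓ F₁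
    F₂ G₁ G₂ hF₁d hF₂d hG₁d hG₂d hF₁c hG₁c hF₂c hG₂c U U' μ θ heq hcombined hpot
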